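/- arXiv:1708.00738 — 4 statements merged into one kernel-verified Lean document; each statement's English description precedes it below -/
import Mathlib

section
/- (Bihari's inequality) Let k : [0,∞) → [0,∞) be continuous, M ∈ ℝ, and g : [0,∞) → [0,∞) continuous, nondecreasing, with G(u) = ∫₀^u ds/g(s) well defined. If y is continuous and y(t) ≤ M + ∫₀^t k(s) g(y(s)) ds for all t ≥ 0, then G(y(t)) ≤ G(M) + ∫₀^t k(s) ds for all t ≥ 0. -/
/-!
Let `z t = M + ∫₀ᵗ k g(y)` be the right-hand side, so `y ≤ z`, `z' = k g(y) ≤ k g(z)` and, as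
long as `g (z t) > 0`, `(G ∘ z)' = z' / g(z) ≤ k`. Since `g ∘ z` is monotone and nonnegative,
it vanishes on an initial interval `[0, c)` and is positive after it. On `[0, c)` the integrand
`k g(y) ≤ k g(z)` vanishes, so `z c = M`; integrating `(G ∘ z)' ≤ k` over `[c, t]` gives
`G (y t) ≤ G (z t) ≤ G M + ∫_c^t k ≤ G M + ∫₀ᵗ k`.
-/

open MeasureTheory Real intervalIntegral Set

theorem monotone_primitive_of_nonneg {f : ℝ → ℝ}
    (hf : ∀ a b, IntervalIntegrable f volume a b) (hf0 : ∀ x, 0 ≤ f x) (a : ℝ) :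
    Monotone fun u => ∫ s in a..u, f s := by
  intro u v huv
  dsimp only
  rw [← integral_add_adjacent_intervals (hf a u) (hf u v)]
  exact le_add_of_nonneg_right (integral_nonneg huv fun x _ => hf0 x)

theorem exists_eq_zero_on_Ico_pos_on_Ioo {α : Type*} [ConditionallyCompleteLinearOrder α]
    {f : α → ℝ} {a b : α} (hab : a ≤ b) (hf : MonotoneOn f (Icc a b))
    (hf0 : ∀ x ∈ Icc a b, 0 ≤ f x) :
    ∃ c ∈ Icc a b, (∀ x ∈ Ico a c, f x = 0) ∧ ∀ x ∈ Ioo c b, 0 < f x := by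
  set S := insert b {x ∈ Icc a b | 0 < f x}
  have hS : S.Nonempty := insert_nonempty _ _
  have ha : ∀ x ∈ S, a ≤ x := by
    rintro x (rfl | hx)
    exacts [hab, hx.1.1]
  have hSbdd : BddBelow S := ⟨a, ha⟩
  refine ⟨sInf S, ⟨le_csInf hS ha, csInf_le hSbdd (mem_insert _ _)⟩, ?_, ?_⟩
  · rintro x ⟨hax, hxc⟩
    have hxb : x ≤ b := hxc.le.trans (csInf_le hSbdd (mem_insert _ _))
    refine le_antisymm (not_lt.1 fun hpos => hxc.not_ge ?_) (hf0 x ⟨hax, hxb⟩)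
    exact csInf_le hSbdd (Or.inr ⟨⟨hax, hxb⟩, hpos⟩)
  · rintro x ⟨hcx, hxb⟩
    obtain ⟨s, hs, hsx⟩ := exists_lt_of_csInf_lt hS hcx
    rcases hs with rfl | ⟨hsI, hspos⟩
    · exact absurd hsx hxb.not_gt
    · exact hspos.trans_le (hf hsI ⟨hsI.1.trans hsx.le, hxb.le⟩ hsx.le)

theorem sub_le_integral_of_hasDerivAt_le_mul {G g k z z' : ℝ → ℝ} {a b : ℝ} (hab : a ≤ b)
    (hG : Continuous G) (hG' : ∀ u, g u ≠ 0 → HasDerivAt G (1 / g u) u)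
    (hk : Continuous k) (hz : ContinuousOn z (Icc a b))
    (hz' : ∀ x ∈ Ioo a b, HasDerivAt z (z' x) x) (hgz : ∀ x ∈ Ioo a b, 0 < g (z x))
    (hz'le : ∀ x ∈ Ioo a b, z' x ≤ k x * g (z x)) :
    G (z b) - G (z a) ≤ ∫ s in a..b, k s := by
  set Φ : ℝ → ℝ := fun x => G (z x) - ∫ s in a..x, k s
  have hΦ : AntitoneOn Φ (Icc a b) := by
    refine antitoneOn_of_hasDerivWithinAt_nonpos (convex_Icc a b)
      ((hG.comp_continuousOn hz).sub (continuous_primitive hk.intervalIntegrable a).continuousOn)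
      (f' := fun x => 1 / g (z x) * z' x - k x) ?_ ?_
    · intro x hx
      rw [interior_Icc] at hx
      exact (((hG' _ (hgz x hx).ne').comp x (hz' x hx)).sub
        (hk.integral_hasStrictDerivAt a x).hasDerivAt).hasDerivWithinAt
    · intro x hx
      rw [interior_Icc] at hx
      rw [sub_nonpos, one_div_mul_eq_div, div_le_iff₀ (hgz x hx)]
      exact hz'le x hx
  have hΦab := hΦ (left_mem_Icc.2 hab) (right_mem_Icc.2 hab) hab
  simp only [Φ, integral_same, sub_zero] at hΦab
  linarith

theorem bihari_inequality_general (k g y G : ℝ → ℝ) (M : ℝ)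
    (hk : Continuous k) (hk0 : ∀ t, 0 ≤ k t)
    (hg : Continuous g) (hg0 : ∀ u, 0 ≤ g u) (hgmono : Monotone g)
    (hGdef : ∀ u, G u = ∫ s in (0:ℝ)..u, 1 / g s)
    (hGint : ∀ u : ℝ, IntervalIntegrable (fun s => 1 / g s) volume 0 u)
    (hy : Continuous y)
    (hineq : ∀ t ≥ (0:ℝ), y t ≤ M + ∫ s in (0:ℝ)..t, k s * g (y s)) :
    ∀ t ≥ (0:ℝ), G (y t) ≤ G M + ∫ s in (0:ℝ)..t, k s := by
  intro t ht
  set z : ℝ → ℝ := fun u => M + ∫ s in (0:ℝ)..u, k s * g (y s)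
  have hkgy : Continuous fun s => k s * g (y s) := hk.mul (hg.comp hy)
  have hz' : ∀ x, HasDerivAt z (k x * g (y x)) x := fun x =>
    ((hkgy.integral_hasStrictDerivAt 0 x).hasDerivAt).const_add M
  have hz_mono : Monotone z := (monotone_primitive_of_nonneg hkgy.intervalIntegrable
    (fun s => mul_nonneg (hk0 s) (hg0 _)) 0).const_add M
  have hGint' : ∀ a b, IntervalIntegrable (fun s => 1 / g s) volume a b :=
    fun a b => (hGint a).symm.trans (hGint b)
  have hG_eq : G = fun u => ∫ s in (0:ℝ)..u, 1 / g s := funext hGdef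
  have hG_mono : Monotone G :=
    hG_eq ▸ monotone_primitive_of_nonneg hGint' (fun s => one_div_nonneg.2 (hg0 s)) 0
  have hG' : ∀ u, g u ≠ 0 → HasDerivAt G (1 / g u) u := fun u hu => by
    rw [hG_eq]
    exact integral_hasDerivAt_right (hGint u)
      (measurable_const.div hg.measurable).stronglyMeasurable.stronglyMeasurableAtFilter
      (continuousAt_const.div hg.continuousAt hu)
  obtain ⟨c, ⟨hc0, hct⟩, hzero, hpos⟩ := exists_eq_zero_on_Ico_pos_on_Ioo ht
    ((hgmono.comp hz_mono).monotoneOn _) (fun x _ => hg0 (z x))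
  have hgy_le : ∀ x ≥ 0, g (y x) ≤ g (z x) := fun x hx => hgmono (hineq x hx)
  have hzc : z c = M := by
    suffices ∫ s in (0:ℝ)..c, k s * g (y s) = 0 by simp [z, this]
    rw [integral_congr_Ioo_of_le hc0 (g := fun _ => 0), intervalIntegral.integral_zero]
    intro x hx
    have hgzx : g (z x) = 0 := hzero x (Ioo_subset_Ico_self hx)
    simp [le_antisymm (hgzx ▸ hgy_le x hx.1.le) (hg0 _)]
  have hz_cont : Continuous z := continuous_iff_continuousAt.2 fun x => (hz' x).continuousAt
  have hGz := sub_le_integral_of_hasDerivAt_le_mul hct (hG_eq ▸ continuous_primitive hGint' 0)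
    hG' hk hz_cont.continuousOn (fun x _ => hz' x) hpos
    fun x hx => mul_le_mul_of_nonneg_left (hgy_le x (hc0.trans hx.1.le)) (hk0 x)
  have hK : ∫ s in (0:ℝ)..c, k s ≥ 0 := integral_nonneg hc0 fun s _ => hk0 s
  rw [← integral_interval_sub_left (hk.intervalIntegrable 0 t) (hk.intervalIntegrable 0 c),
    hzc] at hGz
  linarith [hG_mono (hineq t ht)]

/-- Bihari's inequality. -/
theorem bihari_inequality (k g y G : ℝ → ℝ) (M : ℝ)
    (hk : Continuous k) (hk0 : ∀ t, 0 ≤ k t)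
    (hg : Continuous g) (hg0 : ∀ u, 0 ≤ g u) (hgmono : Monotone g)
    (hGdef : ∀ u, G u = ∫ s in (0:ℝ)..u, 1 / g s)
    (hGint : ∀ u : ℝ, IntervalIntegrable (fun s => 1 / g s) volume 0 u)
    (hy : Continuous y) (hy0 : ∀ t, 0 ≤ y t)
    (hineq : ∀ t ≥ (0:ℝ), y t ≤ M + ∫ s in (0:ℝ)..t, k s * g (y s)) :
    ∀ t ≥ (0:ℝ), G (y t) ≤ G M + ∫ s in (0:ℝ)..t, k s :=
  bihari_inequality_general k g y G M hk hk0 hg hg0 hgmono hGdef hGint hy hineq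
end

section
/- Let u be a C² solution of u_{tt} − Δu + b(t)u_t + m²(t)u = 0 with b(t) = μ₁/(1+t), m²(t) = μ₂²/(1+t)², and let ψ(t,x) = μ₁|x|²/(2(1+t)²). Then with E_{ψ,u}(t) := (1/2)∫_{ℝⁿ} e^{2ψ(t,x)}(u_t² + |∇u|² + m²(t)u²) dx one has the pointwise identity: e^{2ψ}u_t(u_{tt} − Δu + b u_t + m² u) = ∂_t[(e^{2ψ}/2)(u_t² + |∇u|² + m² u²)] − div(e^{2ψ}u_t ∇u) + (e^{2ψ}/ψ_t)u_t²(|∇ψ|² + b ψ_t) − (e^{2ψ}/ψ_t)|u_t∇ψ − ψ_t∇u|² − ψ_t e^{2ψ}(u_t² + m² u²) − (1/2)e^{2ψ}u² (d/dt)m²(t). -/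
/-!
Both sides are expanded pointwise by the product rule. The time derivative of the weighted
energy density produces `⟪∇u, ∂_t ∇u⟫`, the divergence of the flux `e^{2ψ} u_t ∇u` produces
`⟪∇u_t, ∇u⟫` and `u_t Δu`, and the two inner products cancel because mixed partials of a `C²`
function commute. The remaining first-order terms `e^{2ψ} (b u_t² + 2 u_t ⟪∇ψ, ∇u⟫ - ψ_t |∇u|²)`
are what the `1/ψ_t` terms of the identity amount to after completing the square in
`|u_t ∇ψ - ψ_t ∇u|²`; this needs `ψ_t = -μ₁|x|²/(1+t)³ ≠ 0`, i.e. `x ≠ 0`.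
-/

open MeasureTheory Real

noncomputable def psi (μ₁ : ℝ) (n : ℕ) (t : ℝ) (x : EuclideanSpace ℝ (Fin n)) : ℝ :=
  μ₁ * ‖x‖ ^ 2 / (2 * (1 + t) ^ 2)

noncomputable def lap {n : ℕ} (f : EuclideanSpace ℝ (Fin n) → ℝ)
    (x : EuclideanSpace ℝ (Fin n)) : ℝ :=
  ∑ i : Fin n, fderiv ℝ (fun y => fderiv ℝ f y (EuclideanSpace.single i 1)) x
    (EuclideanSpace.single i 1)

noncomputable def divg {n : ℕ} (V : EuclideanSpace ℝ (Fin n) → EuclideanSpace ℝ (Fin n))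
    (x : EuclideanSpace ℝ (Fin n)) : ℝ :=
  ∑ i : Fin n, fderiv ℝ (fun y => V y i) x (EuclideanSpace.single i 1)

noncomputable def ut {n : ℕ} (u : ℝ → EuclideanSpace ℝ (Fin n) → ℝ) (t : ℝ)
    (x : EuclideanSpace ℝ (Fin n)) : ℝ :=
  deriv (fun s => u s x) t

open Function InnerProductSpace

section PartialDerivatives

variable {E F : Type*} [NormedAddCommGroup E] [NormedSpace ℝ E]
  [NormedAddCommGroup F] [NormedSpace ℝ F] {u : ℝ → E → F}

lemma hasDerivAt_of_differentiableAt_uncurry {t : ℝ} {x : E}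
    (hu : DifferentiableAt ℝ (uncurry u) (t, x)) :
    HasDerivAt (fun s => u s x) (fderiv ℝ (uncurry u) (t, x) (1, 0)) t :=
  hu.hasFDerivAt.comp_hasDerivAt_of_eq t ((hasDerivAt_id t).prodMk (hasDerivAt_const t x)) rfl

lemma hasFDerivAt_of_differentiableAt_uncurry {t : ℝ} {x : E}
    (hu : DifferentiableAt ℝ (uncurry u) (t, x)) :
    HasFDerivAt (u t) ((fderiv ℝ (uncurry u) (t, x)).comp (.inr ℝ ℝ E)) x :=
  hu.hasFDerivAt.comp x (hasFDerivAt_prodMk_right t x)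

lemma uncurry_deriv_eq_fderiv_apply (hu : Differentiable ℝ (uncurry u)) :
    uncurry (fun s y => deriv (fun r => u r y) s) = fun p => fderiv ℝ (uncurry u) p (1, 0) :=
  funext fun p => (hasDerivAt_of_differentiableAt_uncurry (hu p)).deriv

lemma ContDiff.uncurry_deriv {n : WithTop ℕ∞} (hu : ContDiff ℝ (n + 1) (uncurry u)) :
    ContDiff ℝ n (uncurry fun s y => deriv (fun r => u r y) s) := by
  rw [uncurry_deriv_eq_fderiv_apply (hu.differentiable (by simp))]
  exact (hu.fderiv_right le_rfl).clm_apply contDiff_const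

lemma ContDiff.hasDerivAt_fderiv_uncurry (hu : ContDiff ℝ 2 (uncurry u)) (t : ℝ) (x : E) :
    HasDerivAt (fun s => fderiv ℝ (u s) x)
      (fderiv ℝ (fun y => deriv (fun r => u r y) t) x) t := by
  have hu1 : Differentiable ℝ (uncurry u) := hu.differentiable two_ne_zero
  have hD : DifferentiableAt ℝ (fderiv ℝ (uncurry u)) (t, x) :=
    (hu.fderiv_right (m := 1) (by norm_num)).differentiable one_ne_zero _
  set D2 := fderiv ℝ (fderiv ℝ (uncurry u)) (t, x)
  have h_space : HasFDerivAt (fun y => deriv (fun r => u r y) t)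
      ((D2.comp (.inr ℝ ℝ E)).flip (1, 0)) x := by
    rw [show (fun y => deriv (fun r => u r y) t) = fun y => fderiv ℝ (uncurry u) (t, y) (1, 0) from
      funext fun y => congrFun (uncurry_deriv_eq_fderiv_apply hu1) (t, y)]
    simpa using (hD.hasFDerivAt.comp x (hasFDerivAt_prodMk_right t x)).clm_apply
      (hasFDerivAt_const ((1 : ℝ), (0 : E)) x)
  have h_time : HasDerivAt (fun s => fderiv ℝ (u s) x) ((D2 (1, 0)).comp (.inr ℝ ℝ E)) t := by
    have := (hD.hasFDerivAt.comp_hasDerivAt_of_eq t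
      ((hasDerivAt_id t).prodMk (hasDerivAt_const t x)) rfl).clm_comp
      (hasDerivAt_const t (ContinuousLinearMap.inr ℝ ℝ E))
    simpa [fun s => (hasFDerivAt_of_differentiableAt_uncurry (hu1 (s, x))).fderiv] using this
  rw [h_space.fderiv]
  convert h_time using 1
  ext v
  exact (hu.contDiffAt.isSymmSndFDerivAt (by simp)).eq _ _

end PartialDerivatives

section Gradient

variable {E : Type*} [NormedAddCommGroup E] [InnerProductSpace ℝ E] [CompleteSpace E]

lemma contDiff_gradient {f : E → ℝ} {n : WithTop ℕ∞} (hf : ContDiff ℝ (n + 1) f) :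
    ContDiff ℝ n (gradient f) :=
  (toDual ℝ E).symm.contDiff.comp (hf.fderiv_right le_rfl)

lemma ContDiff.hasDerivAt_gradient_uncurry {u : ℝ → E → ℝ} (hu : ContDiff ℝ 2 (uncurry u))
    (t : ℝ) (x : E) :
    HasDerivAt (fun s => gradient (u s) x)
      (gradient (fun y => deriv (fun r => u r y) t) x) t :=
  (toDual ℝ E).symm.toContinuousLinearEquiv.hasFDerivAt.comp_hasDerivAt t
    (hu.hasDerivAt_fderiv_uncurry t x)

end Gradient

lemma norm_smul_sub_smul_sq {F : Type*} [NormedAddCommGroup F] [InnerProductSpace ℝ F]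
    (a c : ℝ) (g v : F) :
    ‖a • g - c • v‖ ^ 2 = a ^ 2 * ‖g‖ ^ 2 - 2 * a * c * inner ℝ g v + c ^ 2 * ‖v‖ ^ 2 := by
  rw [norm_sub_sq_real, norm_smul, norm_smul, real_inner_smul_left, real_inner_smul_right,
    mul_pow, mul_pow, Real.norm_eq_abs, Real.norm_eq_abs, sq_abs, sq_abs]
  ring

section Euclidean

variable {n : ℕ}

lemma gradient_apply_eq_fderiv_single (f : EuclideanSpace ℝ (Fin n) → ℝ)
    (y : EuclideanSpace ℝ (Fin n)) (i : Fin n) :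
    gradient f y i = fderiv ℝ f y (EuclideanSpace.single i 1) := by
  rw [← inner_gradient_left, EuclideanSpace.inner_single_right]
  simp

lemma divg_gradient (f : EuclideanSpace ℝ (Fin n) → ℝ) : divg (gradient f) = lap f := by
  ext x
  simp only [divg, lap, gradient_apply_eq_fderiv_single]

lemma fderiv_apply_eq_sum_single (g : EuclideanSpace ℝ (Fin n) → ℝ)
    (x w : EuclideanSpace ℝ (Fin n)) :
    fderiv ℝ g x w = ∑ i, fderiv ℝ g x (EuclideanSpace.single i 1) * w i := by
  rw [← inner_gradient_left, PiLp.inner_apply]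
  simp [gradient_apply_eq_fderiv_single, mul_comm]

lemma divg_smul {g : EuclideanSpace ℝ (Fin n) → ℝ}
    {W : EuclideanSpace ℝ (Fin n) → EuclideanSpace ℝ (Fin n)} {x : EuclideanSpace ℝ (Fin n)}
    (hg : DifferentiableAt ℝ g x) (hW : DifferentiableAt ℝ W x) :
    divg (fun y => g y • W y) x = fderiv ℝ g x (W x) + g x * divg W x := by
  have hWi := (differentiableAt_piLp 2).1 hW
  rw [divg, divg, Finset.mul_sum, fderiv_apply_eq_sum_single g x (W x), ← Finset.sum_add_distrib]
  refine Finset.sum_congr rfl fun i _ => ?_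
  simp only [PiLp.smul_apply, smul_eq_mul]
  rw [fderiv_fun_mul hg (hWi i)]
  simp only [add_apply, smul_apply, smul_eq_mul]
  ring

end Euclidean

section WeightedEnergy

variable {n : ℕ} {u ψ : ℝ → EuclideanSpace ℝ (Fin n) → ℝ} {t : ℝ} {x : EuclideanSpace ℝ (Fin n)}

lemma ContDiff.contDiff_uncurry_ut (hu : ContDiff ℝ 2 (uncurry u)) :
    ContDiff ℝ 1 (uncurry (ut u)) :=
  ContDiff.uncurry_deriv (n := 1) hu

lemma hasDerivAt_weighted_energy_density (hu : ContDiff ℝ 2 (uncurry u))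
    (hψ : DifferentiableAt ℝ (fun s => ψ s x) t) {m2 : ℝ → ℝ} (hm : DifferentiableAt ℝ m2 t) :
    HasDerivAt (fun s => exp (2 * ψ s x) / 2 *
        (ut u s x ^ 2 + ‖gradient (u s) x‖ ^ 2 + m2 s * u s x ^ 2))
      (deriv (fun s => ψ s x) t * exp (2 * ψ t x) *
          (ut u t x ^ 2 + ‖gradient (u t) x‖ ^ 2 + m2 t * u t x ^ 2)
        + exp (2 * ψ t x) * (ut u t x * deriv (fun s => ut u s x) t
          + inner ℝ (gradient (u t) x) (gradient (ut u t) x) + m2 t * u t x * ut u t x)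
        + exp (2 * ψ t x) / 2 * deriv m2 t * u t x ^ 2) t := by
  have hu_t : HasDerivAt (fun s => u s x) (ut u t x) t :=
    ((hu.comp (contDiff_prodMk_left x)).differentiable two_ne_zero t).hasDerivAt
  have hut_t : HasDerivAt (fun s => ut u s x) (deriv (fun s => ut u s x) t) t :=
    ((hu.contDiff_uncurry_ut.comp (contDiff_prodMk_left x)).differentiable one_ne_zero t).hasDerivAt
  have hgrad : HasDerivAt (fun s => gradient (u s) x) (gradient (ut u t) x) t :=
    hu.hasDerivAt_gradient_uncurry t x
  refine (((hψ.hasDerivAt.const_mul 2).exp.div_const 2).fun_mul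
    (((hut_t.fun_pow 2).fun_add hgrad.norm_sq).fun_add
      (hm.hasDerivAt.fun_mul (hu_t.fun_pow 2)))).congr_deriv ?_
  push_cast
  ring

lemma divg_weighted_flux (hu : ContDiff ℝ 2 (uncurry u)) (hψ : DifferentiableAt ℝ (ψ t) x) :
    divg (fun y => (exp (2 * ψ t y) * ut u t y) • gradient (u t) y) x
      = exp (2 * ψ t x) * (2 * ut u t x * inner ℝ (gradient (ψ t) x) (gradient (u t) x)
          + inner ℝ (gradient (ut u t) x) (gradient (u t) x) + ut u t x * lap (u t) x) := by
  have hut : DifferentiableAt ℝ (ut u t) x :=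
    (hu.contDiff_uncurry_ut.comp (contDiff_prodMk_right t)).differentiable one_ne_zero x
  have hgrad : DifferentiableAt ℝ (gradient (u t)) x :=
    (contDiff_gradient (n := 1) (hu.comp (contDiff_prodMk_right t))).differentiable one_ne_zero x
  have hweight := ((hψ.hasFDerivAt.const_mul 2).exp).fun_mul hut.hasFDerivAt
  rw [divg_smul hweight.differentiableAt hgrad, hweight.fderiv, divg_gradient]
  simp only [add_apply, smul_apply, smul_eq_mul, inner_gradient_left]
  ring

theorem weighted_energy_identity (hu : ContDiff ℝ 2 (uncurry u))
    (hψt : DifferentiableAt ℝ (fun s => ψ s x) t) (hψx : DifferentiableAt ℝ (ψ t) x)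
    {m2 : ℝ → ℝ} (hm : DifferentiableAt ℝ m2 t) (b : ℝ) :
    exp (2 * ψ t x) * ut u t x *
        (deriv (fun s => ut u s x) t - lap (u t) x + b * ut u t x + m2 t * u t x)
      = deriv (fun s => exp (2 * ψ s x) / 2 *
          (ut u s x ^ 2 + ‖gradient (u s) x‖ ^ 2 + m2 s * u s x ^ 2)) t
        - divg (fun y => (exp (2 * ψ t y) * ut u t y) • gradient (u t) y) x
        + exp (2 * ψ t x) * (b * ut u t x ^ 2
          + 2 * ut u t x * inner ℝ (gradient (ψ t) x) (gradient (u t) x)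
          - deriv (fun s => ψ s x) t * ‖gradient (u t) x‖ ^ 2)
        - deriv (fun s => ψ s x) t * exp (2 * ψ t x) * (ut u t x ^ 2 + m2 t * u t x ^ 2)
        - 1 / 2 * exp (2 * ψ t x) * u t x ^ 2 * deriv m2 t := by
  rw [(hasDerivAt_weighted_energy_density hu hψt hm).deriv, divg_weighted_flux hu hψx,
    real_inner_comm (gradient (u t) x) (gradient (ut u t) x)]
  ring

end WeightedEnergy

lemma differentiable_psi (μ₁ : ℝ) (n : ℕ) (t : ℝ) : Differentiable ℝ (psi μ₁ n t) := by
  have := (contDiff_norm_sq ℝ (E := EuclideanSpace ℝ (Fin n)) (n := 1)).differentiable one_ne_zero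
  unfold psi
  fun_prop

lemma hasDerivAt_psi (μ₁ : ℝ) {n : ℕ} (x : EuclideanSpace ℝ (Fin n)) {t : ℝ} (ht : 1 + t ≠ 0) :
    HasDerivAt (fun s => psi μ₁ n s x) (-(μ₁ * ‖x‖ ^ 2) / (1 + t) ^ 3) t := by
  have hden := ((hasDerivAt_id' t).const_add 1 |>.fun_pow 2).const_mul 2
  refine ((hasDerivAt_const t (μ₁ * ‖x‖ ^ 2)).div hden (by simpa using ht)).congr_deriv ?_
  field_simp
  ring

theorem energy_identity_general (n : ℕ) (μ₁ μ₂sq : ℝ) (hμ₁ : 0 < μ₁)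
    (u : ℝ → EuclideanSpace ℝ (Fin n) → ℝ)
    (hu : ContDiff ℝ 2 (fun q : ℝ × EuclideanSpace ℝ (Fin n) => u q.1 q.2)) :
    ∀ t ≥ (0:ℝ), ∀ x : EuclideanSpace ℝ (Fin n), x ≠ 0 →
      Real.exp (2 * psi μ₁ n t x) * ut u t x *
          (deriv (fun s => ut u s x) t - lap (u t) x + (μ₁ / (1 + t)) * ut u t x
            + (μ₂sq / (1 + t) ^ 2) * u t x)
        =
      deriv (fun s => Real.exp (2 * psi μ₁ n s x) / 2 *
          ((ut u s x) ^ 2 + ‖gradient (u s) x‖ ^ 2 + (μ₂sq / (1 + s) ^ 2) * (u s x) ^ 2)) t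
        - divg (fun y => (Real.exp (2 * psi μ₁ n t y) * ut u t y) • gradient (u t) y) x
        + Real.exp (2 * psi μ₁ n t x) / deriv (fun s => psi μ₁ n s x) t * (ut u t x) ^ 2 *
            (‖gradient (psi μ₁ n t) x‖ ^ 2 + (μ₁ / (1 + t)) * deriv (fun s => psi μ₁ n s x) t)
        - Real.exp (2 * psi μ₁ n t x) / deriv (fun s => psi μ₁ n s x) t *
            ‖ut u t x • gradient (psi μ₁ n t) x
              - deriv (fun s => psi μ₁ n s x) t • gradient (u t) x‖ ^ 2
        - deriv (fun s => psi μ₁ n s x) t * Real.exp (2 * psi μ₁ n t x) *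
            ((ut u t x) ^ 2 + (μ₂sq / (1 + t) ^ 2) * (u t x) ^ 2)
        - 1 / 2 * Real.exp (2 * psi μ₁ n t x) * (u t x) ^ 2 *
            deriv (fun s => μ₂sq / (1 + s) ^ 2) t := by
  intro t ht x hx
  have h1t : 1 + t ≠ 0 := by positivity
  have hψt := hasDerivAt_psi μ₁ x h1t
  have hψt_ne : deriv (fun s => psi μ₁ n s x) t ≠ 0 := by
    rw [hψt.deriv]
    exact div_ne_zero (neg_ne_zero.2 (mul_pos hμ₁ (pow_pos (norm_pos_iff.2 hx) 2)).ne')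
      (pow_ne_zero 3 h1t)
  have hm : DifferentiableAt ℝ (fun s => μ₂sq / (1 + s) ^ 2) t := by
    fun_prop (disch := exact pow_ne_zero 2 h1t)
  rw [weighted_energy_identity hu hψt.differentiableAt (differentiable_psi μ₁ n t x) hm,
    norm_smul_sub_smul_sq]
  field_simp
  ring

/-- fundamental pointwise energy identity for the scale-invariant
wave equation with damping and mass. -/
theorem energy_identity (n : ℕ) (hn : 1 ≤ n) (μ₁ μ₂sq : ℝ) (hμ₁ : 0 < μ₁) (hμ₂ : 0 ≤ μ₂sq)
    (u : ℝ → EuclideanSpace ℝ (Fin n) → ℝ)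
    (hu : ContDiff ℝ 2 (fun q : ℝ × EuclideanSpace ℝ (Fin n) => u q.1 q.2))
    (hsol : ∀ t ≥ (0:ℝ), ∀ x,
      deriv (fun s => ut u s x) t - lap (u t) x + (μ₁ / (1 + t)) * ut u t x
        + (μ₂sq / (1 + t) ^ 2) * u t x = 0) :
    ∀ t ≥ (0:ℝ), ∀ x : EuclideanSpace ℝ (Fin n), x ≠ 0 →
      Real.exp (2 * psi μ₁ n t x) * ut u t x *
          (deriv (fun s => ut u s x) t - lap (u t) x + (μ₁ / (1 + t)) * ut u t x
            + (μ₂sq / (1 + t) ^ 2) * u t x)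
        =
      deriv (fun s => Real.exp (2 * psi μ₁ n s x) / 2 *
          ((ut u s x) ^ 2 + ‖gradient (u s) x‖ ^ 2 + (μ₂sq / (1 + s) ^ 2) * (u s x) ^ 2)) t
        - divg (fun y => (Real.exp (2 * psi μ₁ n t y) * ut u t y) • gradient (u t) y) x
        + Real.exp (2 * psi μ₁ n t x) / deriv (fun s => psi μ₁ n s x) t * (ut u t x) ^ 2 *
            (‖gradient (psi μ₁ n t) x‖ ^ 2 + (μ₁ / (1 + t)) * deriv (fun s => psi μ₁ n s x) t)
        - Real.exp (2 * psi μ₁ n t x) / deriv (fun s => psi μ₁ n s x) t *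
            ‖ut u t x • gradient (psi μ₁ n t) x
              - deriv (fun s => psi μ₁ n s x) t • gradient (u t) x‖ ^ 2
        - deriv (fun s => psi μ₁ n s x) t * Real.exp (2 * psi μ₁ n t x) *
            ((ut u t x) ^ 2 + (μ₂sq / (1 + t) ^ 2) * (u t x) ^ 2)
        - 1 / 2 * Real.exp (2 * psi μ₁ n t x) * (u t x) ^ 2 *
            deriv (fun s => μ₂sq / (1 + s) ^ 2) t :=
  energy_identity_general n μ₁ μ₂sq hμ₁ u hu
end

section
/- (Blow-up for an ODI) Let K₀, K₁ > 0, α ≥ −2, p > 1, and F ∈ C²([0,T)) satisfy F''(t) + K₀(1+t)^{-1}F'(t) ≥ K₁(1+t)^α |F(t)|^p for all t ∈ [0,T). If F(0) > 0 and F'(0) > 0, then T < ∞, i.e., F cannot exist globally. -/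
/-!
The integrating factor `(1 + t) ^ K₀` turns the inequality into `((1 + t) ^ K₀ F')' ≥ 0`, so
`F' > 0` and `F ≥ F 0` on `[0, ∞)`. Write `p = 2q - 1`. For small `ν > 0` the barrier
`ν F ^ q / (1 + t)` stays below `F'`: where they touch, the inequality (through `α ≥ -2`) puts `F''`
strictly above the derivative of the barrier. Hence `F ^ (1 - q) + (q - 1) ν log (1 + t)` is
nonincreasing, which is impossible because `F ^ (1 - q) > 0` and the logarithm is unbounded.
-/

open Real Set Filter Topology

theorem monotoneOn_Ici_of_hasDerivAt_nonneg {f f' : ℝ → ℝ} {a : ℝ}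
    (hf : ∀ x ≥ a, HasDerivAt f (f' x) x) (hf' : ∀ x ≥ a, 0 ≤ f' x) : MonotoneOn f (Ici a) :=
  monotoneOn_of_hasDerivWithinAt_nonneg (convex_Ici a)
    (fun x hx => (hf x hx).continuousAt.continuousWithinAt)
    (fun x hx => (hf x (interior_subset hx)).hasDerivWithinAt)
    (fun x hx => hf' x (interior_subset hx))

theorem hasDerivAt_one_add_rpow (K : ℝ) {t : ℝ} (ht : 0 < 1 + t) :
    HasDerivAt (fun s => (1 + s) ^ K) (K * (1 + t)⁻¹ * (1 + t) ^ K) t := by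
  have h := ((hasDerivAt_id' t).const_add 1).rpow_const (p := K) (Or.inl ht.ne')
  rw [rpow_sub_one ht.ne'] at h
  convert h using 1
  ring

theorem pos_of_deriv_add_mul_inv_nonneg {g : ℝ → ℝ} {K : ℝ} (hg : Differentiable ℝ g)
    (h : ∀ t ≥ 0, 0 ≤ deriv g t + K * (1 + t)⁻¹ * g t) (h0 : 0 < g 0) {t : ℝ} (ht : 0 ≤ t) :
    0 < g t := by
  have hmono : MonotoneOn (fun s => (1 + s) ^ K * g s) (Ici 0) :=
    monotoneOn_Ici_of_hasDerivAt_nonneg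
      (fun s hs => (hasDerivAt_one_add_rpow K (t := s) (by linarith)).mul (hg s).hasDerivAt)
      (fun s hs =>
        (mul_nonneg (rpow_nonneg (by linarith : (0:ℝ) ≤ 1 + s) K) (h s hs)).trans_eq (by ring))
  have h0t := hmono self_mem_Ici ht ht
  simp only [add_zero, one_rpow, one_mul] at h0t
  exact pos_of_mul_pos_right (h0.trans_le h0t) (by positivity)

/-- The left-hand side is the derivative of the barrier `ν F ^ q / (1 + t)` at a point where
`v = 1 + t`, `A = F t`, `D = F' t` equals the barrier and `S = F'' t`. -/
theorem odi_barrier_deriv_lt {K₀ K₁ α q ν v A₀ A D S : ℝ} (hK₀ : 0 ≤ K₀) (hα : -2 ≤ α)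
    (hq : 1 ≤ q) (hν : 0 ≤ ν) (hv : 1 ≤ v) (hA₀ : 0 < A₀) (hA : A₀ ≤ A)
    (hνK : K₀ * ν * A₀ ^ (1 - q) + ν ^ 2 * q < K₁) (hD : ν * A ^ q / v = D)
    (hS : K₁ * v ^ α * A ^ (2 * q - 1) ≤ S + K₀ * v⁻¹ * D) :
    (ν * (q * A ^ (q - 1) * D) * v - ν * A ^ q) / v ^ 2 < S := by
  set P := A ^ (2 * q - 1)
  have hApos : 0 < A := hA₀.trans_le hA
  have hP : 0 < P := rpow_pos_of_pos hApos _
  have hAq : A ^ q = P * A ^ (1 - q) := by rw [← rpow_add hApos]; congr 1; ring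
  have hAqq : A ^ (q - 1) * A ^ q = P := by rw [← rpow_add hApos]; congr 1; ring
  have hA1q : A ^ (1 - q) ≤ A₀ ^ (1 - q) := rpow_le_rpow_of_nonpos hA₀ hA (by linarith)
  have hvα : (v ^ 2)⁻¹ ≤ v ^ α := by
    have h := rpow_le_rpow_of_exponent_le hv hα
    rwa [rpow_neg (by linarith), rpow_two] at h
  have hK₁ : 0 ≤ K₁ := by
    have := mul_nonneg (mul_nonneg hK₀ hν) (rpow_pos_of_pos hA₀ (1 - q)).le
    have : 0 ≤ ν ^ 2 * q := by positivity
    linarith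
  have hv0 : v ≠ 0 := by positivity
  calc (ν * (q * A ^ (q - 1) * D) * v - ν * A ^ q) / v ^ 2
      = (ν ^ 2 * q * P - ν * A ^ q) / v ^ 2 := by
        rw [← hD, ← hAqq]; field_simp
    _ < (K₁ * P - K₀ * ν * A ^ q) / v ^ 2 := by
        refine div_lt_div_of_pos_right ?_ (by positivity)
        have h1 : K₀ * ν * A ^ q ≤ K₀ * ν * A₀ ^ (1 - q) * P := by
          rw [hAq, mul_comm P, ← mul_assoc]
          exact mul_le_mul_of_nonneg_right
            (mul_le_mul_of_nonneg_left hA1q (mul_nonneg hK₀ hν)) hP.le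
        have h2 : 0 ≤ ν * A ^ q := by positivity
        nlinarith [mul_lt_mul_of_pos_right hνK hP]
    _ = K₁ * (v ^ 2)⁻¹ * P - K₀ * v⁻¹ * D := by
        rw [← hD]; field_simp
    _ ≤ K₁ * v ^ α * P - K₀ * v⁻¹ * D := by gcongr
    _ ≤ S := by linarith

theorem mul_rpow_div_le_deriv_of_odi {F : ℝ → ℝ} {K₀ K₁ α q ν : ℝ} (hK₀ : 0 ≤ K₀)
    (hα : -2 ≤ α) (hq : 1 ≤ q) (hν : 0 ≤ ν) (hFd : Differentiable ℝ F)
    (hF'd : Differentiable ℝ (deriv F))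
    (hineq : ∀ t ≥ (0:ℝ), K₁ * (1 + t) ^ α * |F t| ^ (2 * q - 1) ≤
      deriv (deriv F) t + K₀ * (1 + t)⁻¹ * deriv F t)
    (hF0 : 0 < F 0) (hFge : ∀ t ≥ 0, F 0 ≤ F t)
    (hνF0 : ν * F 0 ^ q ≤ deriv F 0) (hνK : K₀ * ν * F 0 ^ (1 - q) + ν ^ 2 * q < K₁)
    {t : ℝ} (ht : 0 ≤ t) : ν * F t ^ q / (1 + t) ≤ deriv F t := by
  have hFpos : ∀ s ≥ 0, 0 < F s := fun s hs => hF0.trans_le (hFge s hs)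
  have hbarrier : ∀ s ≥ 0, HasDerivAt (fun s => ν * F s ^ q / (1 + s))
      ((ν * (q * F s ^ (q - 1) * deriv F s) * (1 + s) - ν * F s ^ q) / (1 + s) ^ 2) s := by
    intro s hs
    have hpow := (hFd s).hasDerivAt.rpow_const (p := q) (Or.inl (hFpos s hs).ne')
    exact ((hpow.const_mul ν).div ((hasDerivAt_id' s).const_add 1) (by linarith)).congr_deriv
      (by ring)
  refine image_le_of_deriv_right_lt_deriv_boundary
    (fun s hs => (hbarrier s hs.1).continuousAt.continuousWithinAt)
    (fun s hs => (hbarrier s hs.1).hasDerivWithinAt) (by simpa using hνF0)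
    (fun s => (hF'd s).hasDerivAt) ?_ ⟨ht, le_rfl⟩
  rintro s ⟨hs, -⟩ htouch
  have hS := hineq s hs
  rw [abs_of_pos (hFpos s hs)] at hS
  exact odi_barrier_deriv_lt hK₀ hα hq hν (by linarith) hF0 (hFge s hs) hνK htouch
    (by linarith)

theorem false_of_mul_rpow_div_le_deriv {F : ℝ → ℝ} {ν q : ℝ} (hν : 0 < ν) (hq : 1 < q)
    (hFd : Differentiable ℝ F) (hFpos : ∀ t ≥ 0, 0 < F t)
    (h : ∀ t ≥ 0, ν * F t ^ q / (1 + t) ≤ deriv F t) : False := by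
  have hψ : ∀ s ≥ 0, HasDerivAt (fun s => F s ^ (1 - q) + (q - 1) * ν * log (1 + s))
      ((q - 1) * F s ^ (-q) * (ν * F s ^ q / (1 + s) - deriv F s)) s := by
    intro s hs
    have hpow := (hFd s).hasDerivAt.rpow_const (p := 1 - q) (Or.inl (hFpos s hs).ne')
    have hlog := ((hasDerivAt_id' s).const_add 1).log (by linarith)
    refine (hpow.add (hlog.const_mul ((q - 1) * ν))).congr_deriv ?_
    have hinv : F s ^ (-q) * F s ^ q = 1 := by
      rw [← rpow_add (hFpos s hs), neg_add_cancel, rpow_zero]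
    rw [show 1 - q - 1 = -q by ring]
    linear_combination (-(q - 1) * ν / (1 + s)) * hinv
  have hanti : AntitoneOn (fun s => F s ^ (1 - q) + (q - 1) * ν * log (1 + s)) (Ici 0) :=
    antitoneOn_of_hasDerivWithinAt_nonpos (convex_Ici 0)
      (fun s hs => (hψ s hs).continuousAt.continuousWithinAt)
      (fun s hs => (hψ s (interior_subset hs)).hasDerivWithinAt)
      (fun s hs => by
        have hs := interior_subset hs
        exact mul_nonpos_of_nonneg_of_nonpos (by have := hFpos s hs; positivity)
          (sub_nonpos.mpr (h s hs)))
  set c := F 0 ^ (1 - q) / ((q - 1) * ν)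
  have hc : 0 ≤ c := by have := hFpos 0 le_rfl; positivity
  have hT : 0 ≤ exp c - 1 := by linarith [add_one_le_exp c]
  have hψT := hanti self_mem_Ici hT hT
  simp only [add_sub_cancel, log_exp, add_zero, log_one, mul_zero] at hψT
  have hFT : 0 < F (exp c - 1) ^ (1 - q) := rpow_pos_of_pos (hFpos _ hT) _
  have hc' : (q - 1) * ν * c = F 0 ^ (1 - q) := mul_div_cancel₀ _ (by positivity)
  linarith

/-- blow-up for the ordinary differential inequality
`F'' + K₀(1+t)⁻¹F' ≥ K₁(1+t)^α |F|^p` with `F(0) > 0`, `F'(0) > 0`: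
no such `F` exists globally on `[0,∞)`, i.e. the life-span is finite. -/
theorem odi_blow_up (K₀ K₁ α p : ℝ) (hK₀ : 0 < K₀) (hK₁ : 0 < K₁)
    (hα : -2 ≤ α) (hp : 1 < p) (F : ℝ → ℝ) (hF : ContDiff ℝ 2 F)
    (hineq : ∀ t ≥ (0:ℝ),
      K₁ * (1 + t) ^ α * |F t| ^ p ≤ deriv (deriv F) t + K₀ * (1 + t)⁻¹ * deriv F t)
    (hF0 : 0 < F 0) (hF'0 : 0 < deriv F 0) : False := by
  obtain ⟨q, rfl⟩ : ∃ q, p = 2 * q - 1 := ⟨(p + 1) / 2, by ring⟩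
  have hFd : Differentiable ℝ F := hF.differentiable (by norm_num)
  have hF'd : Differentiable ℝ (deriv F) := hF.differentiable_deriv_two
  have hF'pos : ∀ t ≥ 0, 0 < deriv F t := fun t ht =>
    pos_of_deriv_add_mul_inv_nonneg hF'd
      (fun s hs => (by positivity : 0 ≤ K₁ * (1 + s) ^ α * |F s| ^ (2 * q - 1)).trans (hineq s hs))
      hF'0 ht
  have hFge : ∀ t ≥ 0, F 0 ≤ F t := fun t ht =>
    monotoneOn_Ici_of_hasDerivAt_nonneg (fun s _ => (hFd s).hasDerivAt)
      (fun s hs => (hF'pos s hs).le) self_mem_Ici ht ht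
  have hsmall : ∀ᶠ ν in 𝓝 (0:ℝ),
      ν * F 0 ^ q < deriv F 0 ∧ K₀ * ν * F 0 ^ (1 - q) + ν ^ 2 * q < K₁ :=
    (ContinuousAt.eventually_lt (by fun_prop) continuousAt_const (by simpa using hF'0)).and
      (ContinuousAt.eventually_lt (by fun_prop) continuousAt_const (by simpa using hK₁))
  obtain ⟨ν, ⟨hνF0, hνK⟩, hν⟩ :=
    ((hsmall.filter_mono nhdsWithin_le_nhds).and (self_mem_nhdsWithin : Ioi (0:ℝ) ∈ 𝓝[>] 0)).exists
  exact false_of_mul_rpow_div_le_deriv hν (by linarith) hFd (fun t ht => hF0.trans_le (hFge t ht))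
    fun t ht => mul_rpow_div_le_deriv_of_odi hK₀.le hα (by linarith) hν.le hFd hF'd hineq hF0
      hFge hνF0.le hνK ht
end

section
/- (Comparison lemma) Let K₀ > 0 and F, G ∈ C²([0,T₀)) with F(0) = G(0), F'(0) > G'(0), and suppose (F''(t) − G''(t)) + K₀(1+t)^{-1}(F'(t) − G'(t)) ≥ 0 whenever F(t) ≥ G(t) ≥ 0 on an interval. If additionally F'' + K₀(1+t)^{-1}F' ≥ K₁(1+t)^α|F|^p and G'' + K₀(1+t)^{-1}G' ≤ K₁(1+t)^α G^p with G > 0 increasing, then F(t) > G(t) for all t ∈ (0,T₀). -/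
/-!
Put `H = F - G`. Multiplying the difference inequality by `(1 + t) ^ K₀` turns it into
`((1 + t) ^ K₀ * H' t)' ≥ 0`, valid wherever `H ≥ 0`. Hence as long as `H' > 0` on `[0, x)`,
`H` is nonnegative on `[0, x]`, the weighted derivative is nondecreasing there, and so
`(1 + x) ^ K₀ * H' x ≥ H' 0 > 0`. A continuous induction gives `H' > 0` on `[0, T₀)`, so `H`
increases strictly from `H 0 = 0`.
-/

open Real Set

theorem forall_Icc_pos_of_forall_Ico_pos {g : ℝ → ℝ} {a b : ℝ} (hg : ContinuousOn g (Icc a b))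
    (ha : 0 < g a) (step : ∀ x ∈ Ioc a b, (∀ y ∈ Ico a x, 0 < g y) → 0 < g x) :
    ∀ x ∈ Icc a b, 0 < g x := by
  by_contra! hneg
  set S := Icc a b ∩ g ⁻¹' Iic 0
  have hbdd : BddBelow S := ⟨a, fun x hx => hx.1.1⟩
  -- the first point where `g` fails to be positive
  have hm : sInf S ∈ S :=
    (hg.preimage_isClosed_of_isClosed isClosed_Icc isClosed_Iic).csInf_mem hneg hbdd
  have ham : a < sInf S := hm.1.1.lt_of_ne fun h => (h ▸ hm.2 : g a ≤ 0).not_gt ha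
  refine (step (sInf S) ⟨ham, hm.1.2⟩ fun y hy => ?_).not_ge hm.2
  by_contra! hy'
  exact hy.2.not_ge (csInf_le hbdd ⟨⟨hy.1, hy.2.le.trans hm.1.2⟩, hy'⟩)

theorem hasDerivAt_one_add_rpow_mul {g : ℝ → ℝ} {g' K s : ℝ} (hs : 0 < 1 + s)
    (hg : HasDerivAt g g' s) :
    HasDerivAt (fun u => (1 + u) ^ K * g u) ((1 + s) ^ K * (g' + K * (1 + s)⁻¹ * g s)) s := by
  have hw : HasDerivAt (fun u => (1 + u) ^ K) (1 * K * (1 + s) ^ (K - 1)) s :=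
    ((hasDerivAt_id s).const_add 1).rpow_const (Or.inl hs.ne')
  refine (hw.mul hg).congr_deriv ?_
  rw [rpow_sub_one hs.ne']
  field_simp
  ring

section WeightedComparison

variable {H H' H'' : ℝ → ℝ} {K T : ℝ}

theorem monotoneOn_one_add_rpow_mul {x : ℝ} (hxT : x < T)
    (hH' : ∀ t ∈ Ico 0 T, HasDerivAt H' (H'' t) t)
    (hineq : ∀ t ∈ Ico 0 T, 0 ≤ H t → 0 ≤ H'' t + K * (1 + t)⁻¹ * H' t)
    (hH_nonneg : ∀ u ∈ Icc 0 x, 0 ≤ H u) :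
    MonotoneOn (fun u => (1 + u) ^ K * H' u) (Icc 0 x) := by
  have hsub : Icc 0 x ⊆ Ico 0 T := fun u hu => ⟨hu.1, hu.2.trans_lt hxT⟩
  have hderiv : ∀ u ∈ Icc 0 x, HasDerivAt (fun u => (1 + u) ^ K * H' u)
      ((1 + u) ^ K * (H'' u + K * (1 + u)⁻¹ * H' u)) u := fun u hu =>
    hasDerivAt_one_add_rpow_mul (by linarith [hu.1]) (hH' u (hsub hu))
  refine monotoneOn_of_hasDerivWithinAt_nonneg (convex_Icc 0 x)
    (fun u hu => (hderiv u hu).continuousAt.continuousWithinAt)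
    (fun u hu => (hderiv u (interior_subset hu)).hasDerivWithinAt) fun u hu => ?_
  have hu := interior_subset hu
  exact mul_nonneg (rpow_nonneg (by linarith [hu.1]) K)
    (hineq u (hsub hu) (hH_nonneg u hu))

theorem deriv_pos_of_deriv_pos_on_Ico {x : ℝ} (hx : x ∈ Ico 0 T)
    (hH : ∀ t ∈ Ico 0 T, HasDerivAt H (H' t) t) (hH' : ∀ t ∈ Ico 0 T, HasDerivAt H' (H'' t) t)
    (h0 : H 0 = 0) (h0' : 0 < H' 0)
    (hineq : ∀ t ∈ Ico 0 T, 0 ≤ H t → 0 ≤ H'' t + K * (1 + t)⁻¹ * H' t)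
    (hpos : ∀ y ∈ Ico 0 x, 0 < H' y) : 0 < H' x := by
  have hsub : Icc 0 x ⊆ Ico 0 T := fun u hu => ⟨hu.1, hu.2.trans_lt hx.2⟩
  have hmono : MonotoneOn H (Icc 0 x) :=
    monotoneOn_of_hasDerivWithinAt_nonneg (convex_Icc 0 x)
      (fun u hu => (hH u (hsub hu)).continuousAt.continuousWithinAt)
      (fun u hu => (hH u (hsub (interior_subset hu))).hasDerivWithinAt)
      fun u hu => by
        rw [interior_Icc] at hu
        exact (hpos u ⟨hu.1.le, hu.2⟩).le
  have hH_nonneg : ∀ u ∈ Icc 0 x, 0 ≤ H u := fun u hu =>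
    h0 ▸ hmono (left_mem_Icc.2 hx.1) hu hu.1
  have hweighted := monotoneOn_one_add_rpow_mul hx.2 hH' hineq hH_nonneg
    (left_mem_Icc.2 hx.1) (right_mem_Icc.2 hx.1) hx.1
  simp only [add_zero, one_rpow, one_mul] at hweighted
  exact pos_of_mul_pos_right (h0'.trans_le hweighted) (rpow_nonneg (by linarith [hx.1]) K)

theorem deriv_pos_of_weighted_deriv_nonneg
    (hH : ∀ t ∈ Ico 0 T, HasDerivAt H (H' t) t) (hH' : ∀ t ∈ Ico 0 T, HasDerivAt H' (H'' t) t)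
    (h0 : H 0 = 0) (h0' : 0 < H' 0)
    (hineq : ∀ t ∈ Ico 0 T, 0 ≤ H t → 0 ≤ H'' t + K * (1 + t)⁻¹ * H' t) :
    ∀ t ∈ Ico 0 T, 0 < H' t := fun t ht =>
  forall_Icc_pos_of_forall_Ico_pos
    (fun u hu => (hH' u ⟨hu.1, hu.2.trans_lt ht.2⟩).continuousAt.continuousWithinAt) h0'
    (fun _ hx hpos => deriv_pos_of_deriv_pos_on_Ico ⟨hx.1.le, hx.2.trans_lt ht.2⟩
      hH hH' h0 h0' hineq hpos)
    t (right_mem_Icc.2 ht.1)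

theorem pos_of_weighted_deriv_nonneg
    (hH : ∀ t ∈ Ico 0 T, HasDerivAt H (H' t) t) (hH' : ∀ t ∈ Ico 0 T, HasDerivAt H' (H'' t) t)
    (h0 : H 0 = 0) (h0' : 0 < H' 0)
    (hineq : ∀ t ∈ Ico 0 T, 0 ≤ H t → 0 ≤ H'' t + K * (1 + t)⁻¹ * H' t) :
    ∀ t ∈ Ioo 0 T, 0 < H t := by
  have hderiv_pos := deriv_pos_of_weighted_deriv_nonneg hH hH' h0 h0' hineq
  have hmono : StrictMonoOn H (Ico 0 T) :=
    strictMonoOn_of_hasDerivWithinAt_pos (convex_Ico 0 T)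
      (fun u hu => (hH u hu).continuousAt.continuousWithinAt)
      (fun u hu => (hH u (interior_subset hu)).hasDerivWithinAt)
      fun u hu => hderiv_pos u (interior_subset hu)
  intro t ht
  exact h0 ▸ hmono (left_mem_Ico.2 (ht.1.trans ht.2)) (Ioo_subset_Ico_self ht) ht.1

end WeightedComparison

theorem odi_comparison_general (K₀ T₀ : ℝ) (F G : ℝ → ℝ) (hF : ContDiff ℝ 2 F) (hG : ContDiff ℝ 2 G)
    (h0 : F 0 = G 0) (h0' : deriv G 0 < deriv F 0)
    (hdiff : ∀ t ∈ Set.Ico (0:ℝ) T₀, 0 ≤ G t → G t ≤ F t →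
      0 ≤ (deriv (deriv F) t - deriv (deriv G) t)
        + K₀ * (1 + t)⁻¹ * (deriv F t - deriv G t))
    (hGpos : ∀ t ∈ Set.Ico (0:ℝ) T₀, 0 < G t) :
    ∀ t ∈ Set.Ioo (0:ℝ) T₀, G t < F t := by
  have hF1 := hF.differentiable two_ne_zero
  have hG1 := hG.differentiable two_ne_zero
  have hF2 := hF.differentiable_deriv_two
  have hG2 := hG.differentiable_deriv_two
  intro t ht
  refine sub_pos.1 (pos_of_weighted_deriv_nonneg (H := fun s => F s - G s) (K := K₀)
    (fun s _ => (hF1 s).hasDerivAt.sub (hG1 s).hasDerivAt)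
    (fun s _ => (hF2 s).hasDerivAt.sub (hG2 s).hasDerivAt)
    (sub_eq_zero.2 h0) (sub_pos.2 h0') (fun s hs hH => ?_) t ht)
  exact hdiff s hs (hGpos s hs).le (sub_nonneg.1 hH)

/-- comparison lemma for the ordinary differential inequalities
satisfied by `F` and the subsolution `G`. -/
theorem odi_comparison (K₀ K₁ α p T₀ : ℝ) (hK₀ : 0 < K₀) (hK₁ : 0 < K₁) (hp : 1 < p)
    (hT₀ : 0 < T₀) (F G : ℝ → ℝ) (hF : ContDiff ℝ 2 F) (hG : ContDiff ℝ 2 G)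
    (h0 : F 0 = G 0) (h0' : deriv G 0 < deriv F 0)
    (hdiff : ∀ t ∈ Set.Ico (0:ℝ) T₀, 0 ≤ G t → G t ≤ F t →
      0 ≤ (deriv (deriv F) t - deriv (deriv G) t)
        + K₀ * (1 + t)⁻¹ * (deriv F t - deriv G t))
    (hFineq : ∀ t ∈ Set.Ico (0:ℝ) T₀,
      K₁ * (1 + t) ^ α * |F t| ^ p ≤ deriv (deriv F) t + K₀ * (1 + t)⁻¹ * deriv F t)
    (hGineq : ∀ t ∈ Set.Ico (0:ℝ) T₀,
      deriv (deriv G) t + K₀ * (1 + t)⁻¹ * deriv G t ≤ K₁ * (1 + t) ^ α * G t ^ p)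
    (hGpos : ∀ t ∈ Set.Ico (0:ℝ) T₀, 0 < G t)
    (hGmono : MonotoneOn G (Set.Ico (0:ℝ) T₀)) :
    ∀ t ∈ Set.Ioo (0:ℝ) T₀, G t < F t :=
  odi_comparison_general K₀ T₀ F G hF hG h0 h0' hdiff hGpos
end
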